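/- Let X_low be a real N_h×d matrix, X_safe a real N_s×d matrix, D a real N_h×m matrix, γ ≥ 0, λ > 0 real numbers, and r a natural number. Define J(Δ) = ‖X_low Δ − D‖_F² + γ‖X_safe Δ‖_F² + λ‖Δ‖_F², Q = X_lowᵀ X_low + γ X_safeᵀ X_safe + λ I, and M = Q⁻¹ X_lowᵀ D; let R be an invertible real d×d matrix with Rᵀ R = Q, and let σ_1 ≥ σ_2 ≥ … ≥ σ_{min(d,m)} ≥ 0 denote the singular values of the matrix R M. Then the minimum of J over {Δ ∈ ℝ^{d×m} : rank(Δ) ≤ r} equals ∑_{i > r} σ_i² + Tr(Dᵀ D) − Tr(Mᵀ Q M). -/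

import Mathlib

/-!
Since `Q = Rᵀ R` and `Q M = Xlowᵀ D`, completing the square gives
`J Δ = ‖R M - R Δ‖_F² + Tr(Dᵀ D) - Tr(Mᵀ Q M)`, and `rank (R Δ) ≤ rank Δ`, so the claim is the
Eckart–Young theorem for `A = R M`. Write `Aᵀ A = U diag(σᵢ²) Uᵀ` with `U` orthogonal. If
`rank B ≤ r` and `P` is the orthogonal projection onto the row space of `B`, then
`‖A - B‖² ≥ ‖A - A P‖² = ∑ σᵢ² (1 - gᵢ)` with `gᵢ = (Uᵀ P U)ᵢᵢ ∈ [0, 1]` and `∑ gᵢ = Tr P ≤ r`;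
such a weighted sum is smallest when the weight sits on the `r` largest `σᵢ²`. Projecting onto
the top `r` eigenvectors attains the bound with `Δ = M P`. Finally `rank (Aᵀ A) ≤ d`, so at most
`min d m` of the `σᵢ` are nonzero.
-/

open Matrix

/-- The objective `J(Δ) = ‖Xlow Δ − D‖_F² + γ‖Xsafe Δ‖_F² + lam‖Δ‖_F²`,
where `‖A‖_F² = Tr(Aᵀ A)`. -/
noncomputable def J {Nh Ns d m : ℕ} (Xlow : Matrix (Fin Nh) (Fin d) ℝ)
    (Xsafe : Matrix (Fin Ns) (Fin d) ℝ) (D : Matrix (Fin Nh) (Fin m) ℝ)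
    (γ lam : ℝ) (Δ : Matrix (Fin d) (Fin m) ℝ) : ℝ :=
  Matrix.trace ((Xlow * Δ - D)ᵀ * (Xlow * Δ - D))
    + γ * Matrix.trace ((Xsafe * Δ)ᵀ * (Xsafe * Δ))
    + lam * Matrix.trace (Δᵀ * Δ)

/-- `Q = Xlowᵀ Xlow + γ Xsafeᵀ Xsafe + lam I`. -/
noncomputable def Qmat {Nh Ns d : ℕ} (Xlow : Matrix (Fin Nh) (Fin d) ℝ)
    (Xsafe : Matrix (Fin Ns) (Fin d) ℝ) (γ lam : ℝ) : Matrix (Fin d) (Fin d) ℝ :=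
  Xlowᵀ * Xlow + γ • (Xsafeᵀ * Xsafe) + lam • (1 : Matrix (Fin d) (Fin d) ℝ)

/-- `M = Q⁻¹ Xlowᵀ D`. -/
noncomputable def Mmat {Nh Ns d m : ℕ} (Xlow : Matrix (Fin Nh) (Fin d) ℝ)
    (Xsafe : Matrix (Fin Ns) (Fin d) ℝ) (D : Matrix (Fin Nh) (Fin m) ℝ)
    (γ lam : ℝ) : Matrix (Fin d) (Fin m) ℝ :=
  (Qmat Xlow Xsafe γ lam)⁻¹ * Xlowᵀ * D

lemma Matrix.IsSymm.transpose_mul_mul {m n : Type*} [Fintype m] {P : Matrix m m ℝ}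
    (hP : P.IsSymm) (U : Matrix m n ℝ) : (Uᵀ * P * U).IsSymm := by
  rw [IsSymm, transpose_mul, transpose_mul, hP.eq, transpose_transpose, Matrix.mul_assoc]

section Frobenius

variable {ι κ : Type*} [Fintype ι] [Fintype κ]

lemma trace_transpose_mul_self_nonneg (X : Matrix ι κ ℝ) : 0 ≤ (Xᵀ * X).trace := by
  simpa [conjTranspose_eq_transpose_of_trivial] using
    (posSemidef_conjTranspose_mul_self X).trace_nonneg

lemma trace_transpose_mul_comm (A B : Matrix ι κ ℝ) : (Aᵀ * B).trace = (Bᵀ * A).trace := by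
  rw [← trace_transpose, transpose_mul, transpose_transpose]

lemma trace_sub_transpose_mul_sub (A B : Matrix ι κ ℝ) :
    ((A - B)ᵀ * (A - B)).trace = (Aᵀ * A).trace - 2 * (Aᵀ * B).trace + (Bᵀ * B).trace := by
  rw [transpose_sub, Matrix.sub_mul, Matrix.mul_sub, Matrix.mul_sub, trace_sub, trace_sub,
    trace_sub, trace_transpose_mul_comm B A]
  ring

variable {P : Matrix κ κ ℝ}

lemma trace_mul_transpose_mul_mul_eq_of_isSymm (hPs : P.IsSymm) (hPi : IsIdempotentElem P)
    (X : Matrix ι κ ℝ) : ((X * P)ᵀ * (X * P)).trace = (Xᵀ * (X * P)).trace := by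
  rw [transpose_mul, hPs.eq, Matrix.mul_assoc, trace_mul_comm, Matrix.mul_assoc,
    Matrix.mul_assoc, hPi.eq]

/-- Pythagoras for an orthogonal projection acting on the rows of `X`. -/
lemma trace_transpose_mul_self_eq_add (hPs : P.IsSymm) (hPi : IsIdempotentElem P)
    (X : Matrix ι κ ℝ) :
    (Xᵀ * X).trace = ((X - X * P)ᵀ * (X - X * P)).trace + ((X * P)ᵀ * (X * P)).trace := by
  rw [trace_sub_transpose_mul_sub, trace_mul_transpose_mul_mul_eq_of_isSymm hPs hPi]
  ring

lemma mul_eq_self_of_transpose_mul_self_mul_eq [DecidableEq κ] {B : Matrix ι κ ℝ}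
    (h : Bᵀ * B * P = Bᵀ * B) : B * P = B := by
  have hY : (B * (1 - P))ᵀ * (B * (1 - P)) = 0 := by
    rw [transpose_mul, Matrix.mul_assoc, ← Matrix.mul_assoc Bᵀ, Matrix.mul_sub, Matrix.mul_one,
      h, sub_self, Matrix.mul_zero]
  rw [← conjTranspose_eq_transpose_of_trivial, conjTranspose_mul_self_eq_zero, Matrix.mul_sub,
    Matrix.mul_one, sub_eq_zero] at hY
  exact hY.symm

end Frobenius

section Orthogonal

variable {n : Type*} [Fintype n] [DecidableEq n] {U : Matrix n n ℝ}

lemma Matrix.IsHermitian.exists_eq_mul_diagonal_mul_transpose {S : Matrix n n ℝ}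
    (hS : S.IsHermitian) (e : n ≃ n) :
    ∃ U : Matrix n n ℝ, Uᵀ * U = 1 ∧ S = U * diagonal (hS.eigenvalues ∘ e) * Uᵀ := by
  set W : Matrix n n ℝ := (hS.eigenvectorUnitary : Matrix n n ℝ)
  have hW : Wᵀ * W = 1 := by
    simpa [star_eq_conjTranspose, conjTranspose_eq_transpose_of_trivial] using
      mem_unitaryGroup_iff'.mp hS.eigenvectorUnitary.2
  refine ⟨W.submatrix id e, ?_, ?_⟩
  · rw [transpose_submatrix, ← submatrix_mul _ _ _ _ _ Function.bijective_id, hW,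
      submatrix_one_equiv]
  · rw [← submatrix_diagonal_equiv, transpose_submatrix, submatrix_mul_equiv,
      submatrix_mul_equiv, submatrix_id_id]
    conv_lhs => rw [hS.spectral_theorem]
    simp [Unitary.conjStarAlgAut_apply, star_eq_conjTranspose, W]

lemma isSymm_mul_diagonal_mul_transpose (w : n → ℝ) : (U * diagonal w * Uᵀ).IsSymm := by
  simpa using (isSymm_diagonal w).transpose_mul_mul Uᵀ

lemma trace_mul_diagonal_mul_transpose_mul (μ : n → ℝ) (P : Matrix n n ℝ) :
    (U * diagonal μ * Uᵀ * P).trace = ∑ i, μ i * (Uᵀ * P * U) i i := by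
  rw [Matrix.mul_assoc, Matrix.mul_assoc, trace_mul_comm, Matrix.mul_assoc, Matrix.mul_assoc,
    ← Matrix.mul_assoc Uᵀ]
  simp [trace, diagonal_mul]

variable (hU : Uᵀ * U = 1)
include hU

lemma mul_diagonal_mul_transpose_mul_mul_diagonal_mul_transpose (a b : n → ℝ) :
    U * diagonal a * Uᵀ * (U * diagonal b * Uᵀ) = U * diagonal (a * b) * Uᵀ := by
  simp only [Matrix.mul_assoc]
  rw [← Matrix.mul_assoc Uᵀ U, hU, Matrix.one_mul, ← Matrix.mul_assoc (diagonal a),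
    diagonal_mul_diagonal]
  rfl

lemma transpose_mul_mul_diagonal_mul_transpose_mul (w : n → ℝ) :
    Uᵀ * (U * diagonal w * Uᵀ) * U = diagonal w := by
  simp only [← Matrix.mul_assoc, hU, Matrix.one_mul]
  rw [Matrix.mul_assoc, hU, Matrix.mul_one]

lemma rank_diagonal_le_of_eq_mul_diagonal_mul_transpose {S : Matrix n n ℝ} {μ : n → ℝ}
    (hS : S = U * diagonal μ * Uᵀ) : (diagonal μ).rank ≤ S.rank := by
  rw [← transpose_mul_mul_diagonal_mul_transpose_mul hU μ, ← hS]
  exact (rank_mul_le_left _ _).trans (rank_mul_le_right _ _)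

lemma trace_transpose_mul_mul (P : Matrix n n ℝ) : (Uᵀ * P * U).trace = P.trace := by
  rw [Matrix.mul_assoc, trace_mul_comm, Matrix.mul_assoc, mul_eq_one_comm.mp hU, Matrix.mul_one]

lemma IsIdempotentElem.transpose_mul_mul {P : Matrix n n ℝ} (hP : IsIdempotentElem P) :
    IsIdempotentElem (Uᵀ * P * U) := by
  rw [IsIdempotentElem, Matrix.mul_assoc, ← Matrix.mul_assoc U, ← Matrix.mul_assoc U,
    mul_eq_one_comm.mp hU, Matrix.one_mul, Matrix.mul_assoc, ← Matrix.mul_assoc P, hP.eq,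
    Matrix.mul_assoc]

lemma isIdempotentElem_mul_diagonal_mul_transpose (p : n → Prop) [DecidablePred p] :
    IsIdempotentElem (U * diagonal (fun i => if p i then (1 : ℝ) else 0) * Uᵀ) := by
  rw [IsIdempotentElem, mul_diagonal_mul_transpose_mul_mul_diagonal_mul_transpose hU]
  congr
  funext i
  by_cases h : p i <;> simp [h]

end Orthogonal

section Projection

lemma diag_mem_Icc_of_isSymm_of_isIdempotentElem {n : Type*} [Fintype n] {G : Matrix n n ℝ}
    (hs : G.IsSymm) (hi : IsIdempotentElem G) (i : n) : G i i ∈ Set.Icc 0 1 := by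
  have hsq : G i i = ∑ j, G i j ^ 2 := by
    conv_lhs => rw [← hi.eq]
    simp only [mul_apply, sq, hs.apply]
  have hle : G i i ^ 2 ≤ G i i :=
    hsq ▸ Finset.single_le_sum (f := fun j => G i j ^ 2) (fun j _ => sq_nonneg _)
      (Finset.mem_univ i)
  constructor <;> nlinarith [sq_nonneg (G i i)]

/-- The orthogonal projection onto the row space of `B`, built from the eigenvectors of `Bᵀ B`
with nonzero eigenvalue. -/
lemma exists_isSymm_isIdempotentElem_mul_eq_self {ι κ : Type*} [Fintype ι] [Fintype κ]
    [DecidableEq κ] (B : Matrix ι κ ℝ) :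
    ∃ P : Matrix κ κ ℝ, P.IsSymm ∧ IsIdempotentElem P ∧ P.trace ≤ B.rank ∧ B * P = B := by
  have hS : (Bᵀ * B).IsHermitian := by
    simpa only [conjTranspose_eq_transpose_of_trivial] using isHermitian_conjTranspose_mul_self B
  obtain ⟨U, hU, hBB⟩ := hS.exists_eq_mul_diagonal_mul_transpose (Equiv.refl κ)
  generalize _ ∘ _ = ν at hBB
  set w : κ → ℝ := fun i => if ν i ≠ 0 then 1 else 0
  refine ⟨U * diagonal w * Uᵀ, isSymm_mul_diagonal_mul_transpose w, ?_, ?_, ?_⟩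
  · exact isIdempotentElem_mul_diagonal_mul_transpose hU _
  · calc (U * diagonal w * Uᵀ).trace = (Uᵀ * (U * diagonal w * Uᵀ) * U).trace :=
          (trace_transpose_mul_mul hU _).symm
      _ = ((diagonal ν).rank : ℝ) := by
          rw [transpose_mul_mul_diagonal_mul_transpose_mul hU, trace_diagonal, rank_diagonal,
            Fintype.card_subtype, Finset.sum_boole]
      _ ≤ (Bᵀ * B).rank := by
          exact_mod_cast rank_diagonal_le_of_eq_mul_diagonal_mul_transpose hU hBB
      _ = B.rank := by rw [rank_transpose_mul_self]
  · apply mul_eq_self_of_transpose_mul_self_mul_eq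
    rw [hBB, mul_diagonal_mul_transpose_mul_mul_diagonal_mul_transpose hU]
    congr
    funext i
    by_cases h : ν i = 0 <;> simp [w, h]

end Projection

section KyFan

variable {m r : ℕ} {μ s : Fin m → ℝ}

lemma sum_filter_le_sum_mul_one_sub_of_threshold {c : ℝ} (hc : 0 ≤ c)
    (hhead : ∀ i : Fin m, (i : ℕ) < r → c ≤ μ i) (htail : ∀ i : Fin m, r ≤ (i : ℕ) → μ i ≤ c)
    (hs : ∀ i, s i ∈ Set.Icc 0 1) (hsum : ∑ i, s i ≤ r) :
    ∑ i ∈ Finset.univ.filter (fun i : Fin m => r ≤ (i : ℕ)), μ i ≤ ∑ i, μ i * (1 - s i) := by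
  have hterm : ∀ i : Fin m, (if r ≤ (i : ℕ) then μ i else 0)
      + c * ((if (i : ℕ) < r then 1 else 0) - s i) ≤ μ i * (1 - s i) := by
    intro i
    obtain ⟨hs0, hs1⟩ := hs i
    by_cases hi : (i : ℕ) < r
    · simp only [hi, if_true, if_neg (not_le.mpr hi), zero_add]
      nlinarith [hhead i hi]
    · simp only [hi, if_false, if_pos (not_lt.mp hi)]
      nlinarith [htail i (not_lt.mp hi)]
  have hcount : ∑ i, s i ≤ ((Finset.univ.filter (fun i : Fin m => (i : ℕ) < r)).card : ℝ) := by
    have hm : ∑ i, s i ≤ m := by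
      simpa using Finset.sum_le_sum fun i (_ : i ∈ Finset.univ) => (hs i).2
    rw [Fin.card_filter_val_lt]
    push_cast
    exact le_min hm hsum
  calc ∑ i ∈ Finset.univ.filter (fun i : Fin m => r ≤ (i : ℕ)), μ i
      = ∑ i : Fin m, if r ≤ (i : ℕ) then μ i else 0 := Finset.sum_filter _ _
    _ ≤ (∑ i : Fin m, if r ≤ (i : ℕ) then μ i else 0)
          + c * ((Finset.univ.filter (fun i : Fin m => (i : ℕ) < r)).card - ∑ i, s i) :=
        le_add_of_nonneg_right (mul_nonneg hc (sub_nonneg.mpr hcount))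
    _ = ∑ i : Fin m, ((if r ≤ (i : ℕ) then μ i else 0)
          + c * ((if (i : ℕ) < r then 1 else 0) - s i)) := by
        rw [Finset.sum_add_distrib, ← Finset.mul_sum, Finset.sum_sub_distrib, Finset.sum_boole]
    _ ≤ ∑ i, μ i * (1 - s i) := Finset.sum_le_sum fun i _ => hterm i

lemma Antitone.sum_filter_le_sum_mul_one_sub (hμ : Antitone μ) (hμ0 : ∀ i, 0 ≤ μ i)
    (hs : ∀ i, s i ∈ Set.Icc 0 1) (hsum : ∑ i, s i ≤ r) :
    ∑ i ∈ Finset.univ.filter (fun i : Fin m => r ≤ (i : ℕ)), μ i ≤ ∑ i, μ i * (1 - s i) := by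
  obtain ⟨c, hc, hhead, htail⟩ : ∃ c, 0 ≤ c ∧ (∀ i : Fin m, (i : ℕ) < r → c ≤ μ i) ∧
      ∀ i : Fin m, r ≤ (i : ℕ) → μ i ≤ c := by
    by_cases hr : r < m
    · exact ⟨μ ⟨r, hr⟩, hμ0 _, fun i hi => hμ (Fin.le_iff_val_le_val.mpr hi.le),
        fun i hi => hμ (Fin.le_iff_val_le_val.mpr hi)⟩
    · exact ⟨0, le_rfl, fun i _ => hμ0 i, fun i hi => absurd i.isLt (by omega)⟩
  exact sum_filter_le_sum_mul_one_sub_of_threshold hc hhead htail hs hsum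

end KyFan

section EckartYoung

variable {ι : Type*} [Fintype ι] {m : ℕ} {A : Matrix ι (Fin m) ℝ}
  {U : Matrix (Fin m) (Fin m) ℝ} {μ : Fin m → ℝ}
  (hU : Uᵀ * U = 1) (hA : Aᵀ * A = U * diagonal μ * Uᵀ)
include hU hA

lemma trace_sub_mul_transpose_mul_sub_mul {P : Matrix (Fin m) (Fin m) ℝ} (hPs : P.IsSymm)
    (hPi : IsIdempotentElem P) :
    ((A - A * P)ᵀ * (A - A * P)).trace = ∑ i, μ i * (1 - (Uᵀ * P * U) i i) := by
  have htot : (Aᵀ * A).trace = ∑ i, μ i := by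
    rw [hA, ← trace_transpose_mul_mul hU, transpose_mul_mul_diagonal_mul_transpose_mul hU,
      trace_diagonal]
  have hproj : ((A * P)ᵀ * (A * P)).trace = ∑ i, μ i * (Uᵀ * P * U) i i := by
    rw [trace_mul_transpose_mul_mul_eq_of_isSymm hPs hPi, ← Matrix.mul_assoc, hA,
      trace_mul_diagonal_mul_transpose_mul]
  have := trace_transpose_mul_self_eq_add hPs hPi A
  simp only [mul_sub, mul_one, Finset.sum_sub_distrib]
  linarith

lemma Antitone.sum_filter_le_trace_sub_transpose_mul_sub (hμ : Antitone μ) (hμ0 : ∀ i, 0 ≤ μ i)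
    {r : ℕ} {B : Matrix ι (Fin m) ℝ} (hB : B.rank ≤ r) :
    ∑ i ∈ Finset.univ.filter (fun i : Fin m => r ≤ (i : ℕ)), μ i
      ≤ ((A - B)ᵀ * (A - B)).trace := by
  obtain ⟨P, hPs, hPi, hPtr, hBP⟩ := exists_isSymm_isIdempotentElem_mul_eq_self B
  have hG : ∀ i, (Uᵀ * P * U) i i ∈ Set.Icc 0 1 :=
    diag_mem_Icc_of_isSymm_of_isIdempotentElem (hPs.transpose_mul_mul U)
      (hPi.transpose_mul_mul hU)
  have hGtr : ∑ i, (Uᵀ * P * U) i i ≤ r :=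
    calc ∑ i, (Uᵀ * P * U) i i = P.trace := trace_transpose_mul_mul hU P
      _ ≤ B.rank := hPtr
      _ ≤ r := by exact_mod_cast hB
  have hXP : (A - B) - (A - B) * P = A - A * P := by
    rw [Matrix.sub_mul, hBP]
    abel
  calc ∑ i ∈ Finset.univ.filter (fun i : Fin m => r ≤ (i : ℕ)), μ i
      ≤ ∑ i, μ i * (1 - (Uᵀ * P * U) i i) := hμ.sum_filter_le_sum_mul_one_sub hμ0 hG hGtr
    _ = ((A - A * P)ᵀ * (A - A * P)).trace :=
        (trace_sub_mul_transpose_mul_sub_mul hU hA hPs hPi).symm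
    _ ≤ ((A - B)ᵀ * (A - B)).trace := by
        rw [trace_transpose_mul_self_eq_add hPs hPi (A - B), hXP]
        linarith [trace_transpose_mul_self_nonneg ((A - B) * P)]

lemma exists_rank_le_trace_sub_mul_transpose_mul_sub_mul_eq (r : ℕ) :
    ∃ P : Matrix (Fin m) (Fin m) ℝ, P.rank ≤ r ∧ ((A - A * P)ᵀ * (A - A * P)).trace
      = ∑ i ∈ Finset.univ.filter (fun i : Fin m => r ≤ (i : ℕ)), μ i := by
  set w : Fin m → ℝ := fun i => if (i : ℕ) < r then 1 else 0
  refine ⟨U * diagonal w * Uᵀ, ?_, ?_⟩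
  · calc (U * diagonal w * Uᵀ).rank ≤ (diagonal w).rank :=
          (rank_mul_le_left _ _).trans (rank_mul_le_right _ _)
      _ = (Finset.univ.filter (fun i : Fin m => (i : ℕ) < r)).card := by
          rw [rank_diagonal, Fintype.card_subtype]
          simp [w]
      _ ≤ r := by
          rw [Fin.card_filter_val_lt]
          exact min_le_right _ _
  · rw [trace_sub_mul_transpose_mul_sub_mul hU hA (isSymm_mul_diagonal_mul_transpose w)
      (isIdempotentElem_mul_diagonal_mul_transpose hU _),
      transpose_mul_mul_diagonal_mul_transpose_mul hU, Finset.sum_filter]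
    refine Finset.sum_congr rfl fun i _ => ?_
    by_cases hi : (i : ℕ) < r
    · simp [w, hi, not_le.mpr hi]
    · simp [w, hi, not_lt.mp hi]

end EckartYoung

lemma Antitone.eq_zero_of_rank_diagonal_le {m d : ℕ} {μ : Fin m → ℝ} (hμ : Antitone μ)
    (hμ0 : ∀ i, 0 ≤ μ i) (hrank : (diagonal μ).rank ≤ d) (i : Fin m) (hi : d ≤ (i : ℕ)) :
    μ i = 0 := by
  by_contra hne
  have hpos : 0 < μ i := (hμ0 i).lt_of_ne' hne
  have hcard : (Finset.Iic i).card ≤ (diagonal μ).rank := by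
    rw [rank_diagonal, Fintype.card_subtype]
    exact Finset.card_le_card fun j hj =>
      Finset.mem_filter.mpr ⟨Finset.mem_univ j, (hpos.trans_le (hμ (Finset.mem_Iic.mp hj))).ne'⟩
  rw [Fin.card_Iic] at hcard
  omega

lemma sum_filter_lt_min_eq {d m : ℕ} {A : Matrix (Fin d) (Fin m) ℝ}
    {U : Matrix (Fin m) (Fin m) ℝ} {μ : Fin m → ℝ} (hU : Uᵀ * U = 1)
    (hA : Aᵀ * A = U * diagonal μ * Uᵀ) (hμ : Antitone μ) (hμ0 : ∀ i, 0 ≤ μ i) (r : ℕ) :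
    ∑ i ∈ Finset.univ.filter (fun i : Fin m => r ≤ (i : ℕ) ∧ (i : ℕ) < min d m), μ i
      = ∑ i ∈ Finset.univ.filter (fun i : Fin m => r ≤ (i : ℕ)), μ i := by
  have hrank : (diagonal μ).rank ≤ d :=
    (rank_diagonal_le_of_eq_mul_diagonal_mul_transpose hU hA).trans
      ((rank_transpose_mul_self A).le.trans (rank_le_height A))
  refine Finset.sum_subset (fun i hi => ?_) (fun i hi hni => ?_)
  · simp only [Finset.mem_filter] at hi ⊢
    exact ⟨hi.1, hi.2.1⟩
  · simp only [Finset.mem_filter, Finset.mem_univ, true_and, not_and, not_lt] at hi hni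
    exact hμ.eq_zero_of_rank_diagonal_le hμ0 hrank i ((min_le_iff.mp (hni hi)).resolve_right
      (not_le.mpr i.isLt))

section Objective

variable {Nh Ns d m : ℕ} {Xlow : Matrix (Fin Nh) (Fin d) ℝ} {Xsafe : Matrix (Fin Ns) (Fin d) ℝ}
  {D : Matrix (Fin Nh) (Fin m) ℝ} {γ lam : ℝ}

lemma Qmat_mul_Mmat (hQ : IsUnit (Qmat Xlow Xsafe γ lam)) :
    Qmat Xlow Xsafe γ lam * Mmat Xlow Xsafe D γ lam = Xlowᵀ * D := by
  rw [Mmat, Matrix.mul_assoc, mul_nonsing_inv_cancel_left _ _ ((isUnit_iff_isUnit_det _).mp hQ)]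

/-- Completing the square: `J` is, up to a constant, the squared Frobenius distance from `R Δ`
to `R M`. -/
lemma J_eq {R : Matrix (Fin d) (Fin d) ℝ} {M : Matrix (Fin d) (Fin m) ℝ}
    (hRQ : Rᵀ * R = Qmat Xlow Xsafe γ lam) (hQM : Qmat Xlow Xsafe γ lam * M = Xlowᵀ * D)
    (Δ : Matrix (Fin d) (Fin m) ℝ) :
    J Xlow Xsafe D γ lam Δ = ((R * M - R * Δ)ᵀ * (R * M - R * Δ)).trace + (Dᵀ * D).trace
      - (Mᵀ * Qmat Xlow Xsafe γ lam * M).trace := by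
  have hR : ∀ X Y : Matrix (Fin d) (Fin m) ℝ,
      ((R * X)ᵀ * (R * Y)).trace = (Xᵀ * Qmat Xlow Xsafe γ lam * Y).trace := by
    intro X Y
    rw [← hRQ, transpose_mul]
    simp only [Matrix.mul_assoc]
  have hQ : (Δᵀ * Qmat Xlow Xsafe γ lam * Δ).trace = ((Xlow * Δ)ᵀ * (Xlow * Δ)).trace
      + γ * ((Xsafe * Δ)ᵀ * (Xsafe * Δ)).trace + lam * (Δᵀ * Δ).trace := by
    simp only [Qmat, Matrix.mul_add, Matrix.add_mul, Matrix.mul_smul, Matrix.smul_mul,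
      Matrix.mul_one, transpose_mul, Matrix.mul_assoc, trace_add, trace_smul, smul_eq_mul]
  have hcross : ((Xlow * Δ)ᵀ * D).trace = (Δᵀ * Qmat Xlow Xsafe γ lam * M).trace := by
    rw [Matrix.mul_assoc, hQM, transpose_mul, Matrix.mul_assoc]
  rw [_root_.J, trace_sub_transpose_mul_sub, trace_sub_transpose_mul_sub,
    trace_transpose_mul_comm (R * M) (R * Δ),
    hR, hR, hR, hQ, hcross]
  ring

end Objective

theorem stmt_8_general {Nh Ns d m : ℕ}
    (Xlow : Matrix (Fin Nh) (Fin d) ℝ) (Xsafe : Matrix (Fin Ns) (Fin d) ℝ)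
    (D : Matrix (Fin Nh) (Fin m) ℝ) (γ lam : ℝ)
    (r : ℕ) (R : Matrix (Fin d) (Fin d) ℝ) (hR : IsUnit R)
    (hRQ : Rᵀ * R = Qmat Xlow Xsafe γ lam)
    (hH : ((R * Mmat Xlow Xsafe D γ lam)ᵀ * (R * Mmat Xlow Xsafe D γ lam)).IsHermitian)
    (σ : Fin m → ℝ)
    (hσnonneg : ∀ i, 0 ≤ σ i)
    (hσmono : ∀ i j : Fin m, i ≤ j → σ j ≤ σ i)
    (hσeig : ∃ e : Equiv.Perm (Fin m), ∀ i, σ i ^ 2 = hH.eigenvalues (e i)) :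
    IsLeast {x : ℝ | ∃ Δ : Matrix (Fin d) (Fin m) ℝ, Δ.rank ≤ r ∧ J Xlow Xsafe D γ lam Δ = x}
      ((∑ i ∈ Finset.univ.filter (fun i : Fin m => r ≤ (i : ℕ) ∧ (i : ℕ) < min d m),
          σ i ^ 2)
        + Matrix.trace (Dᵀ * D)
        - Matrix.trace ((Mmat Xlow Xsafe D γ lam)ᵀ * Qmat Xlow Xsafe γ lam
            * Mmat Xlow Xsafe D γ lam)) := by
  obtain ⟨e, he⟩ := hσeig
  obtain ⟨U, hU, hA⟩ := hH.exists_eq_mul_diagonal_mul_transpose e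
  rw [show hH.eigenvalues ∘ e = fun i => σ i ^ 2 from funext fun i => (he i).symm] at hA
  have hμ : Antitone fun i => σ i ^ 2 := fun i j hij =>
    pow_le_pow_left₀ (hσnonneg j) (hσmono i j hij) 2
  have hμ0 : ∀ i, 0 ≤ σ i ^ 2 := fun i => sq_nonneg _
  have hQM := Qmat_mul_Mmat (D := D) (hRQ ▸ ((isUnit_transpose R).mpr hR).mul hR)
  rw [sum_filter_lt_min_eq hU hA hμ hμ0]
  refine ⟨?_, ?_⟩
  · obtain ⟨P, hP, hval⟩ := exists_rank_le_trace_sub_mul_transpose_mul_sub_mul_eq hU hA r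
    refine ⟨Mmat Xlow Xsafe D γ lam * P, (rank_mul_le_right _ _).trans hP, ?_⟩
    rw [J_eq hRQ hQM, ← Matrix.mul_assoc, hval]
  · rintro _ ⟨Δ, hΔ, rfl⟩
    rw [J_eq hRQ hQM]
    linarith [hμ.sum_filter_le_trace_sub_transpose_mul_sub hU hA hμ0
      ((rank_mul_le_right R Δ).trans hΔ)]

/-- Let `σ₁ ≥ σ₂ ≥ … ≥ 0` be the singular values of `R M`
(the nonnegative square roots of the eigenvalues of `(R M)ᵀ (R M)`, listed in
nonincreasing order).  Then the minimum of `J` over `{Δ : rank Δ ≤ r}` equals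
`∑_{i > r} σ_i² + Tr(Dᵀ D) − Tr(Mᵀ Q M)`. -/
theorem stmt_8 {Nh Ns d m : ℕ}
    (Xlow : Matrix (Fin Nh) (Fin d) ℝ) (Xsafe : Matrix (Fin Ns) (Fin d) ℝ)
    (D : Matrix (Fin Nh) (Fin m) ℝ) (γ lam : ℝ) (hγ : 0 ≤ γ) (hlam : 0 < lam)
    (r : ℕ) (R : Matrix (Fin d) (Fin d) ℝ) (hR : IsUnit R)
    (hRQ : Rᵀ * R = Qmat Xlow Xsafe γ lam)
    (hH : ((R * Mmat Xlow Xsafe D γ lam)ᵀ * (R * Mmat Xlow Xsafe D γ lam)).IsHermitian)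
    (σ : Fin m → ℝ)
    (hσnonneg : ∀ i, 0 ≤ σ i)
    (hσmono : ∀ i j : Fin m, i ≤ j → σ j ≤ σ i)
    (hσeig : ∃ e : Equiv.Perm (Fin m), ∀ i, σ i ^ 2 = hH.eigenvalues (e i)) :
    IsLeast {x : ℝ | ∃ Δ : Matrix (Fin d) (Fin m) ℝ, Δ.rank ≤ r ∧ J Xlow Xsafe D γ lam Δ = x}
      ((∑ i ∈ Finset.univ.filter (fun i : Fin m => r ≤ (i : ℕ) ∧ (i : ℕ) < min d m),
          σ i ^ 2)
        + Matrix.trace (Dᵀ * D)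
        - Matrix.trace ((Mmat Xlow Xsafe D γ lam)ᵀ * Qmat Xlow Xsafe γ lam
            * Mmat Xlow Xsafe D γ lam)) :=
  stmt_8_general Xlow Xsafe D γ lam r R hR hRQ hH σ hσnonneg hσmono hσeig
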